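/- The algebra P_n is right-symmetric: (xy)z - x(yz) = (xz)y - x(zy) for all x,y,z in P_n. -/

import Mathlib

inductive PBasis (n : ℕ) : Type
  | a : Fin n → Fin n → PBasis n
  | b : Fin n → Fin n → PBasis n
  | c : Fin n → PBasis n
  | d : Fin n → Fin n → PBasis n
  | e : Fin n → Fin n → PBasis n
  deriving DecidableEq

abbrev Pn (F : Type*) [Field F] (n : ℕ) : Type _ := PBasis n →₀ F

open PBasis in
noncomputable def mulB (F : Type*) [Field F] {n : ℕ} : PBasis n → PBasis n → Pn F n
  | a i j, c k => if k = i then Finsupp.single (d i j) 1 else 0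
  | b i j, c k => if k = i then Finsupp.single (e i j) 1 else 0
  | a i j, e k l => if i = k ∧ j = l then Finsupp.single (c j) 1 else 0
  | e k l, a i j => if i = k ∧ j = l then Finsupp.single (c j) 1 else 0
  | b i j, d k l => if i = k ∧ j = l then -Finsupp.single (c j) 1 else 0
  | d k l, b i j => if i = k ∧ j = l then -Finsupp.single (c j) 1 else 0
  | _, _ => 0

noncomputable def mulLin (F : Type*) [Field F] {n : ℕ} :
    Pn F n →ₗ[F] Pn F n →ₗ[F] Pn F n :=
  Finsupp.lift (Pn F n →ₗ[F] Pn F n) F (PBasis n)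
    (fun u => Finsupp.lift (Pn F n) F (PBasis n) (fun v => mulB F u v))

noncomputable instance (F : Type*) [Field F] (n : ℕ) : Mul (Pn F n) :=
  ⟨fun x y => mulLin F x y⟩


/-!
Linearizing the identity `(ab)a = 0` of `P_n` gives `(ab)c = -(cb)a`, and in `P_n` every commutator
is central. Hence `(xy)z - (xz)y = (yz)x - (zy)x = [y,z]x = x[y,z] = x(yz) - x(zy)`, which is right
symmetry. Both identities are trilinear, so they need only be checked on basis vectors, where they
are a finite computation with the multiplication table.
-/

open Finsupp

def IsRightSymmetric {R M : Type*} [CommSemiring R] [AddCommGroup M] [Module R M]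
    (μ : M →ₗ[R] M →ₗ[R] M) : Prop :=
  ∀ x y z, μ (μ x y) z - μ x (μ y z) = μ (μ x z) y - μ x (μ z y)

theorem isRightSymmetric_of_commutator_central {R M : Type*} [CommSemiring R] [AddCommGroup M]
    [Module R M] (μ : M →ₗ[R] M →ₗ[R] M) (hanti : ∀ a b c, μ (μ a b) c + μ (μ c b) a = 0)
    (hcentral : ∀ a b c, μ (μ a b - μ b a) c = μ c (μ a b - μ b a)) :
    IsRightSymmetric μ := by
  intro x y z
  have hswap : μ (μ x y) z - μ (μ x z) y = μ x (μ y z) - μ x (μ z y) :=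
    calc μ (μ x y) z - μ (μ x z) y = μ (μ y z - μ z y) x := by
          rw [eq_neg_of_add_eq_zero_left (hanti x y z), eq_neg_of_add_eq_zero_left (hanti x z y),
            map_sub, LinearMap.sub_apply, neg_sub_neg]
      _ = μ x (μ y z - μ z y) := hcentral y z x
      _ = μ x (μ y z) - μ x (μ z y) := map_sub _ _ _
  rwa [sub_eq_sub_iff_sub_eq_sub]

theorem mul_mul_add_mul_mul_eq_zero_of_single {ι R : Type*} [CommSemiring R]
    (μ : (ι →₀ R) →ₗ[R] (ι →₀ R) →ₗ[R] (ι →₀ R))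
    (h : ∀ u v w, μ (μ (single u 1) (single v 1)) (single w 1)
      + μ (μ (single w 1) (single v 1)) (single u 1) = 0) (a b c : ι →₀ R) :
    μ (μ a b) c + μ (μ c b) a = 0 := by
  -- the second summand is the trilinear map `(a, b, c) ↦ μ (μ c b) a`
  have key : μ.compr₂ μ + (LinearMap.llcomp R _ _ _).compl₁₂ μ.flip μ.flip = 0 := by
    ext u v w : 6
    simpa using h u v w
  simpa using congr($key a b c)

theorem commutator_central_of_single {ι R : Type*} [CommRing R]
    (μ : (ι →₀ R) →ₗ[R] (ι →₀ R) →ₗ[R] (ι →₀ R))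
    (h : ∀ u v w, μ (μ (single u 1) (single v 1) - μ (single v 1) (single u 1)) (single w 1)
      = μ (single w 1) (μ (single u 1) (single v 1) - μ (single v 1) (single u 1)))
    (a b c : ι →₀ R) :
    μ (μ a b - μ b a) c = μ c (μ a b - μ b a) := by
  -- without subtraction: instance search does not find `Sub` on these trilinear maps
  have key : μ.compr₂ μ + (μ.compr₂ μ.flip).flip = μ.compr₂ μ.flip + (μ.compr₂ μ).flip := by
    ext u v w : 6
    simpa [sub_eq_sub_iff_add_eq_add] using h u v w
  simpa [sub_eq_sub_iff_add_eq_add] using congr($key a b c)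

namespace PBasis

variable (F : Type*) [Field F] {n : ℕ}

@[simp]
theorem mulLin_single_single (u v : PBasis n) :
    mulLin F (single u 1) (single v 1) = mulB F u v := by
  simp [mulLin]

theorem single_mul_mul_add_mul_mul (u v w : PBasis n) :
    (single u 1 : Pn F n) * single v 1 * single w 1 + single w 1 * single v 1 * single u 1 = 0 := by
  change mulLin F (mulLin F _ _) _ + mulLin F (mulLin F _ _) _ = 0
  rcases u with ⟨i, j⟩ | ⟨i, j⟩ | i | ⟨i, j⟩ | ⟨i, j⟩ <;>
    rcases v with ⟨k, l⟩ | ⟨k, l⟩ | k | ⟨k, l⟩ | ⟨k, l⟩ <;>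
    rcases w with ⟨p, q⟩ | ⟨p, q⟩ | p | ⟨p, q⟩ | ⟨p, q⟩ <;>
    simp only [mulLin_single_single, mulB, apply_ite (mulLin F), map_zero, map_neg,
      LinearMap.zero_apply] <;>
    (try split_ifs) <;> simp_all [mulB] <;> (try split_ifs) <;> simp_all [eq_comm]

theorem single_commutator_central (u v w : PBasis n) :
    ((single u 1 : Pn F n) * single v 1 - single v 1 * single u 1) * single w 1
      = single w 1 * (single u 1 * single v 1 - single v 1 * single u 1) := by
  change mulLin F (mulLin F _ _ - mulLin F _ _) _ = mulLin F _ (mulLin F _ _ - mulLin F _ _)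
  rcases u with ⟨i, j⟩ | ⟨i, j⟩ | i | ⟨i, j⟩ | ⟨i, j⟩ <;>
    rcases v with ⟨k, l⟩ | ⟨k, l⟩ | k | ⟨k, l⟩ | ⟨k, l⟩ <;>
    rcases w with ⟨p, q⟩ | ⟨p, q⟩ | p | ⟨p, q⟩ | ⟨p, q⟩ <;>
    simp only [mulLin_single_single, mulB, apply_ite (mulLin F), map_zero, map_neg, map_sub,
      LinearMap.zero_apply, LinearMap.sub_apply, apply_ite (mulLin F (single _ 1))] <;>
    (try split_ifs) <;> simp_all [mulB]

theorem isRightSymmetric_mulLin : IsRightSymmetric (mulLin F (n := n)) :=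
  isRightSymmetric_of_commutator_central _
    (mul_mul_add_mul_mul_eq_zero_of_single _ (single_mul_mul_add_mul_mul F))
    (commutator_central_of_single _ (single_commutator_central F))

end PBasis

theorem stmt (F : Type*) [Field F] (n : ℕ) :
    ∀ x y z : Pn F n,
      (x * y) * z - x * (y * z) = (x * z) * y - x * (z * y) :=
  PBasis.isRightSymmetric_mulLin F
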